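/- Bounded deadbeat steering under uniform controllability (construction in the proof of Lemma 5.2): Let Υ > 0 with ‖A_j‖ ≤ Υ and ‖B_j‖ ≤ Υ for all j, and suppose for some stage k and integer t_k ≥ 1 with k + t_k ≤ N the controllability matrix satisfies Ξ_{k,t_k}Ξ_{k,t_k}ᵀ ⪰ λ_C I with λ_C > 0. Set Ψ = Σ_{i=1}^{t_k} Υ^i. Then for every p̄ ∈ ℝ^{n_x} there exist controls q_k,…,q_{k+t_k−1} ∈ ℝ^{n_u} such that the states defined by p_k = p̄ and p_{j+1} = A_jp_j + B_jq_j for j = k,…,k+t_k−1 satisfy: p_{k+t_k} = 0; ( Σ_{j=k}^{k+t_k−1} ‖q_j‖² )^{1/2} ≤ (ΨΥ^{t_k}/λ_C)‖p̄‖; and ‖p_j‖ ≤ ( Υ^{j−k} + Ψ²Υ^{t_k}/λ_C )‖p̄‖ for all j = k,…,k+t_k−1. -/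

import Mathlib

/-!
Let `Ξ = Ξ_{k,t}`, `Φ = A_{k+t-1} ⋯ A_k` and `G = Ξ Ξᵀ ⪰ λ_C I`. Solve `G w = -Φ p̄` and feed
the minimum-energy input `q = Ξᵀ w`: by variation of constants the state at time `k + t` is
`Φ p̄ + Ξ q = Φ p̄ + G w = 0`. Coercivity of `G` gives `λ_C ‖w‖ ≤ ‖Φ p̄‖ ≤ Υ^t ‖p̄‖`; the block
of `Ξ` acting on the input at time `k + m` is a product of `t - m` factors of norm `≤ Υ`, so
the input energy is at most `Ψ ‖w‖`, and every intermediate state is bounded by its free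
response plus `Ψ` times that energy.
-/

open Matrix BigOperators Finset

/-- The spectral (operator) norm of a real matrix. -/
noncomputable def opNorm {m n : Type*} [Fintype m] [Fintype n] [DecidableEq n]
    (A : Matrix m n ℝ) : ℝ :=
  ‖LinearMap.toContinuousLinearMap (Matrix.toEuclideanLin A)‖

/-- The Euclidean norm of a vector in `ℝ^n`. -/
noncomputable def evNorm {n : ℕ} (x : Fin n → ℝ) : ℝ :=
  ‖(EuclideanSpace.equiv (Fin n) ℝ).symm x‖

/-- Ordered product of matrices: `prodE E i len = E (i+len-1) * ⋯ * E (i+1) * E i`. -/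
def prodE {n : ℕ} (E : ℕ → Matrix (Fin n) (Fin n) ℝ) : ℕ → ℕ → Matrix (Fin n) (Fin n) ℝ
  | _, 0 => 1
  | i, (len + 1) => E (i + len) * prodE E i len

/-- The controllability matrix `Ξ_{k,j}`. -/
noncomputable def ctrb {nx nu : ℕ} (A : ℕ → Matrix (Fin nx) (Fin nx) ℝ)
    (B : ℕ → Matrix (Fin nx) (Fin nu) ℝ) (k j : ℕ) :
    Matrix (Fin nx) (Fin j × Fin nu) ℝ :=
  Matrix.of fun r mc =>
    (prodE A (k + j - (mc.1 : ℕ)) (mc.1 : ℕ) * B (k + j - 1 - (mc.1 : ℕ))) r mc.2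

open scoped Matrix.Norms.L2Operator

section Norms

variable {m n l : Type*} [Fintype m] [Fintype n] [Fintype l] [DecidableEq n]

lemma opNorm_eq_l2_opNorm (A : Matrix m n ℝ) : opNorm A = ‖A‖ := (l2_opNorm_def A).symm

lemma opNorm_nonneg (A : Matrix m n ℝ) : 0 ≤ opNorm A := by
  rw [opNorm_eq_l2_opNorm]; exact norm_nonneg _

lemma opNorm_transpose [DecidableEq m] (A : Matrix m n ℝ) : opNorm Aᵀ = opNorm A := by
  rw [opNorm_eq_l2_opNorm, opNorm_eq_l2_opNorm, ← l2_opNorm_conjTranspose A,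
    conjTranspose_eq_transpose_of_trivial]

lemma opNorm_mul_le [DecidableEq l] (A : Matrix m n ℝ) (B : Matrix n l ℝ) :
    opNorm (A * B) ≤ opNorm A * opNorm B := by
  simp only [opNorm_eq_l2_opNorm]; exact l2_opNorm_mul A B

lemma opNorm_one_le : opNorm (1 : Matrix n n ℝ) ≤ 1 :=
  ContinuousLinearMap.opNorm_le_bound _ zero_le_one fun x => by simp

end Norms

section EuclideanNorm

variable {n : ℕ}

lemma evNorm_eq_norm_toLp (x : Fin n → ℝ) : evNorm x = ‖WithLp.toLp 2 x‖ := rfl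

lemma evNorm_nonneg (x : Fin n → ℝ) : 0 ≤ evNorm x := norm_nonneg _

lemma evNorm_add_le (x y : Fin n → ℝ) : evNorm (x + y) ≤ evNorm x + evNorm y := by
  simp only [evNorm_eq_norm_toLp, WithLp.toLp_add]; exact norm_add_le _ _

lemma evNorm_sum_le {ι : Type*} (s : Finset ι) (x : ι → Fin n → ℝ) :
    evNorm (∑ i ∈ s, x i) ≤ ∑ i ∈ s, evNorm (x i) := by
  simp only [evNorm_eq_norm_toLp, WithLp.toLp_sum]; exact norm_sum_le _ _

lemma evNorm_sq (x : Fin n → ℝ) : evNorm x ^ 2 = x ⬝ᵥ x := by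
  rw [evNorm_eq_norm_toLp, EuclideanSpace.norm_sq_eq]
  simp [dotProduct, sq]

lemma dotProduct_le_evNorm_mul (x y : Fin n → ℝ) : x ⬝ᵥ y ≤ evNorm x * evNorm y := by
  have h := real_inner_le_norm (WithLp.toLp 2 x) (WithLp.toLp 2 y)
  simpa [evNorm_eq_norm_toLp, PiLp.inner_apply, dotProduct, mul_comm] using h

lemma evNorm_mulVec_le {m : ℕ} (A : Matrix (Fin m) (Fin n) ℝ) (x : Fin n → ℝ) :
    evNorm (A *ᵥ x) ≤ opNorm A * evNorm x := by
  rw [opNorm_eq_l2_opNorm]; exact l2_opNorm_mulVec A (WithLp.toLp 2 x)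

lemma evNorm_neg (x : Fin n → ℝ) : evNorm (-x) = evNorm x := by
  simp only [evNorm_eq_norm_toLp, WithLp.toLp_neg, norm_neg]

end EuclideanNorm

lemma exists_mulVec_eq_of_posSemidef_sub_smul_one {n : ℕ} {G : Matrix (Fin n) (Fin n) ℝ}
    {c : ℝ} (hc : 0 < c) (hG : (G - c • (1 : Matrix (Fin n) (Fin n) ℝ)).PosSemidef)
    (y : Fin n → ℝ) : ∃ w, G *ᵥ w = y ∧ c * evNorm w ≤ evNorm y := by
  have hGpd : G.PosDef := by
    simpa using PosDef.posSemidef_add hG (PosDef.one.smul hc)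
  obtain ⟨w, rfl⟩ := mulVec_surjective_iff_isUnit.mpr hGpd.isUnit y
  refine ⟨w, rfl, ?_⟩
  have hcoercive : c * evNorm w ^ 2 ≤ w ⬝ᵥ (G *ᵥ w) := by
    have := hG.dotProduct_mulVec_nonneg w
    simp only [star_trivial, sub_mulVec, dotProduct_sub, smul_mulVec, one_mulVec,
      dotProduct_smul, smul_eq_mul, sub_nonneg] at this
    rwa [evNorm_sq]
  have hCS := dotProduct_le_evNorm_mul w (G *ᵥ w)
  rcases (evNorm_nonneg w).eq_or_lt with hw | hw
  · rw [← hw, mul_zero]; exact evNorm_nonneg _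
  · nlinarith

lemma sum_range_pow_sub {R : Type*} [CommSemiring R] (x : R) (i : ℕ) :
    ∑ m ∈ range i, x ^ (i - m) = ∑ s ∈ Icc 1 i, x ^ s := by
  rw [← sum_range_reflect, ← Ico_add_one_right_eq_Icc, sum_Ico_eq_sum_range,
    Nat.add_sub_cancel]
  refine sum_congr rfl fun m hm => ?_
  rw [add_comm 1 m]
  congr 1
  have := mem_range.mp hm
  omega

lemma Real.sqrt_sum_sq_le_sum {ι : Type*} {s : Finset ι} {a : ι → ℝ} (ha : ∀ i ∈ s, 0 ≤ a i) :
    √(∑ i ∈ s, a i ^ 2) ≤ ∑ i ∈ s, a i :=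
  Real.sqrt_le_iff.mpr ⟨sum_nonneg ha, sum_sq_le_sq_sum_of_nonneg ha⟩

lemma Real.le_sqrt_sum_sq {ι : Type*} {s : Finset ι} {a : ι → ℝ} {j : ι} (hj : j ∈ s)
    (ha : 0 ≤ a j) : a j ≤ √(∑ i ∈ s, a i ^ 2) :=
  (Real.le_sqrt ha (sum_nonneg fun i _ => sq_nonneg (a i))).mpr
    (single_le_sum (f := fun i => a i ^ 2) (fun i _ => sq_nonneg (a i)) hj)

lemma Matrix.mul_transpose_eq_sum_blocks {m n ι R : Type*} [Fintype n] [Fintype ι]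
    [CommSemiring R] (M : Matrix m (ι × n) R) :
    M * Mᵀ = ∑ c, M.submatrix id (Prod.mk c) * (M.submatrix id (Prod.mk c))ᵀ := by
  ext r s
  simp [mul_apply, Fintype.sum_prod_type, sum_apply]

section Trajectory

variable {nx nu : ℕ} (A : ℕ → Matrix (Fin nx) (Fin nx) ℝ) (B : ℕ → Matrix (Fin nx) (Fin nu) ℝ)

lemma opNorm_prodE_le {N : ℕ} {Υ : ℝ} (hΥ : 0 ≤ Υ) (hA : ∀ j < N, opNorm (A j) ≤ Υ) (i : ℕ) :
    ∀ {len : ℕ}, i + len ≤ N → opNorm (prodE A i len) ≤ Υ ^ len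
  | 0, _ => by simpa [prodE] using opNorm_one_le
  | len + 1, h => calc
      opNorm (prodE A i (len + 1)) ≤ opNorm (A (i + len)) * opNorm (prodE A i len) :=
        opNorm_mul_le _ _
      _ ≤ Υ * Υ ^ len :=
        mul_le_mul (hA _ (by omega)) (opNorm_prodE_le hΥ hA i (by omega)) (opNorm_nonneg _) hΥ
      _ = Υ ^ (len + 1) := by ring

/-- `stateSeq A B k x₀ u i` is the state at time `k + i` of `x_{j+1} = A_j x_j + B_j u_{j-k}`
started from `x₀` at time `k`; the input `u` is indexed by elapsed time. -/
def stateSeq (k : ℕ) (x₀ : Fin nx → ℝ) (u : ℕ → Fin nu → ℝ) : ℕ → Fin nx → ℝ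
  | 0 => x₀
  | i + 1 => A (k + i) *ᵥ stateSeq k x₀ u i + B (k + i) *ᵥ u i

lemma stateSeq_sub_succ (k : ℕ) (x₀ : Fin nx → ℝ) (u : ℕ → Fin nu → ℝ) {j : ℕ} (hj : k ≤ j) :
    stateSeq A B k x₀ u (j + 1 - k)
      = A j *ᵥ stateSeq A B k x₀ u (j - k) + B j *ᵥ u (j - k) := by
  obtain ⟨i, rfl⟩ := Nat.exists_eq_add_of_le hj
  simp [show k + i + 1 - k = i + 1 by omega, stateSeq]

/-- The response at time `k + i` to a unit input at time `k + m`, for `m < i`. -/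
def impulseResponse (k i m : ℕ) : Matrix (Fin nx) (Fin nu) ℝ :=
  prodE A (k + m + 1) (i - 1 - m) * B (k + m)

lemma impulseResponse_succ_self (k i : ℕ) : impulseResponse A B k (i + 1) i = B (k + i) := by
  simp [impulseResponse, prodE]

lemma mul_impulseResponse {k i m : ℕ} (hm : m < i) :
    A (k + i) * impulseResponse A B k i m = impulseResponse A B k (i + 1) m := by
  obtain ⟨d, rfl⟩ := Nat.exists_eq_add_of_lt hm
  simp only [impulseResponse, show m + d + 1 + 1 - 1 - m = d + 1 by omega,
    show m + d + 1 - 1 - m = d by omega, prodE, Matrix.mul_assoc,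
    show k + m + 1 + d = k + (m + d + 1) by omega]

lemma stateSeq_eq (k : ℕ) (x₀ : Fin nx → ℝ) (u : ℕ → Fin nu → ℝ) (i : ℕ) :
    stateSeq A B k x₀ u i
      = prodE A k i *ᵥ x₀ + ∑ m ∈ range i, impulseResponse A B k i m *ᵥ u m := by
  induction i with
  | zero => simp [stateSeq, prodE]
  | succ i ih =>
    have hsum : A (k + i) *ᵥ ∑ m ∈ range i, impulseResponse A B k i m *ᵥ u m
        = ∑ m ∈ range i, impulseResponse A B k (i + 1) m *ᵥ u m := by
      rw [mulVec_sum]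
      refine sum_congr rfl fun m hm => ?_
      rw [mulVec_mulVec, mul_impulseResponse A B (mem_range.mp hm)]
    rw [stateSeq, ih, mulVec_add, hsum, mulVec_mulVec, sum_range_succ,
      impulseResponse_succ_self, add_assoc]
    rfl


lemma ctrb_submatrix_eq (k t : ℕ) (c : Fin t) :
    (ctrb A B k t).submatrix id (Prod.mk c) = impulseResponse A B k t (t - 1 - c) := by
  ext r v
  simp only [ctrb, impulseResponse, submatrix_apply, id, of_apply]
  rw [show k + (t - 1 - c) + 1 = k + t - c by omega, show t - 1 - (t - 1 - c) = (c : ℕ) by omega,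
    show k + (t - 1 - c) = k + t - 1 - c by omega]

lemma ctrb_mul_transpose (k t : ℕ) :
    ctrb A B k t * (ctrb A B k t)ᵀ
      = ∑ m ∈ range t, impulseResponse A B k t m * (impulseResponse A B k t m)ᵀ := by
  rw [Matrix.mul_transpose_eq_sum_blocks, ← sum_range_reflect]
  simp only [ctrb_submatrix_eq]
  exact Fin.sum_univ_eq_sum_range (fun c => impulseResponse A B k t (t - 1 - c) *
    (impulseResponse A B k t (t - 1 - c))ᵀ) t

lemma stateSeq_gramianInput (k t : ℕ) (x₀ w : Fin nx → ℝ) :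
    stateSeq A B k x₀ (fun m => (impulseResponse A B k t m)ᵀ *ᵥ w) t
      = prodE A k t *ᵥ x₀ + (ctrb A B k t * (ctrb A B k t)ᵀ) *ᵥ w := by
  simp [stateSeq_eq, ctrb_mul_transpose, sum_mulVec, mulVec_mulVec]

end Trajectory

section Bounds

variable {nx nu N : ℕ} {A : ℕ → Matrix (Fin nx) (Fin nx) ℝ} {B : ℕ → Matrix (Fin nx) (Fin nu) ℝ}
  {Υ : ℝ}

lemma opNorm_impulseResponse_le (hΥ : 0 ≤ Υ) (hA : ∀ j < N, opNorm (A j) ≤ Υ)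
    (hB : ∀ j < N, opNorm (B j) ≤ Υ) {k i m : ℕ} (hm : m < i) (hi : k + i ≤ N) :
    opNorm (impulseResponse A B k i m) ≤ Υ ^ (i - m) := calc
  opNorm (impulseResponse A B k i m)
      ≤ opNorm (prodE A (k + m + 1) (i - 1 - m)) * opNorm (B (k + m)) := opNorm_mul_le _ _
  _ ≤ Υ ^ (i - 1 - m) * Υ :=
      mul_le_mul (opNorm_prodE_le A hΥ hA _ (by omega)) (hB _ (by omega)) (opNorm_nonneg _)
        (pow_nonneg hΥ _)
  _ = Υ ^ (i - m) := by rw [← pow_succ]; congr 1; omega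

lemma evNorm_stateSeq_le (hΥ : 0 ≤ Υ) (hA : ∀ j < N, opNorm (A j) ≤ Υ)
    (hB : ∀ j < N, opNorm (B j) ≤ Υ) {k i : ℕ} (hi : k + i ≤ N) (x₀ : Fin nx → ℝ)
    (u : ℕ → Fin nu → ℝ) :
    evNorm (stateSeq A B k x₀ u i)
      ≤ Υ ^ i * evNorm x₀ + ∑ m ∈ range i, Υ ^ (i - m) * evNorm (u m) := by
  rw [stateSeq_eq]
  refine (evNorm_add_le _ _).trans (add_le_add ?_ ((evNorm_sum_le _ _).trans ?_))
  · exact (evNorm_mulVec_le _ _).trans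
      (mul_le_mul_of_nonneg_right (opNorm_prodE_le A hΥ hA k hi) (evNorm_nonneg _))
  · refine sum_le_sum fun m hm => (evNorm_mulVec_le _ _).trans ?_
    exact mul_le_mul_of_nonneg_right
      (opNorm_impulseResponse_le hΥ hA hB (mem_range.mp hm) hi) (evNorm_nonneg _)


lemma sqrt_sum_evNorm_gramianInput_sq_le (hΥ : 0 ≤ Υ) (hA : ∀ j < N, opNorm (A j) ≤ Υ)
    (hB : ∀ j < N, opNorm (B j) ≤ Υ) {k t : ℕ} (hkt : k + t ≤ N) (w : Fin nx → ℝ) :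
    √(∑ m ∈ range t, evNorm ((impulseResponse A B k t m)ᵀ *ᵥ w) ^ 2)
      ≤ (∑ s ∈ Icc 1 t, Υ ^ s) * evNorm w := calc
  _ ≤ ∑ m ∈ range t, evNorm ((impulseResponse A B k t m)ᵀ *ᵥ w) :=
      Real.sqrt_sum_sq_le_sum fun m _ => evNorm_nonneg _
  _ ≤ ∑ m ∈ range t, Υ ^ (t - m) * evNorm w := by
      refine sum_le_sum fun m hm => (evNorm_mulVec_le _ _).trans ?_
      rw [opNorm_transpose]
      exact mul_le_mul_of_nonneg_right
        (opNorm_impulseResponse_le hΥ hA hB (mem_range.mp hm) hkt) (evNorm_nonneg _)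
  _ = (∑ s ∈ Icc 1 t, Υ ^ s) * evNorm w := by rw [← sum_mul, sum_range_pow_sub]

lemma evNorm_stateSeq_le_of_energy (hΥ : 0 ≤ Υ) (hA : ∀ j < N, opNorm (A j) ≤ Υ)
    (hB : ∀ j < N, opNorm (B j) ≤ Υ) {k t i : ℕ} (hkt : k + t ≤ N) (hi : i ≤ t)
    (x₀ : Fin nx → ℝ) (u : ℕ → Fin nu → ℝ) :
    evNorm (stateSeq A B k x₀ u i)
      ≤ Υ ^ i * evNorm x₀ + (∑ s ∈ Icc 1 t, Υ ^ s) * √(∑ m ∈ range t, evNorm (u m) ^ 2) := by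
  set E := √(∑ m ∈ range t, evNorm (u m) ^ 2)
  refine (evNorm_stateSeq_le hΥ hA hB (by omega) x₀ u).trans (add_le_add_right ?_ _)
  calc ∑ m ∈ range i, Υ ^ (i - m) * evNorm (u m)
      ≤ ∑ m ∈ range i, Υ ^ (i - m) * E := by
        refine sum_le_sum fun m hm => mul_le_mul_of_nonneg_left ?_ (pow_nonneg hΥ _)
        exact Real.le_sqrt_sum_sq (a := fun m => evNorm (u m))
          (mem_range.mpr ((mem_range.mp hm).trans_le hi)) (evNorm_nonneg _)
    _ = (∑ s ∈ Icc 1 i, Υ ^ s) * E := by rw [← sum_mul, sum_range_pow_sub]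
    _ ≤ (∑ s ∈ Icc 1 t, Υ ^ s) * E :=
        mul_le_mul_of_nonneg_right
          (sum_le_sum_of_subset_of_nonneg (Icc_subset_Icc_right hi)
            fun s _ _ => pow_nonneg hΥ s)
          (Real.sqrt_nonneg _)

end Bounds

theorem bounded_deadbeat_steering_general
    (N nx nu : ℕ)
    (A : ℕ → Matrix (Fin nx) (Fin nx) ℝ) (B : ℕ → Matrix (Fin nx) (Fin nu) ℝ)
    (Υ lamC : ℝ) (hΥ : 0 < Υ) (hlamC : 0 < lamC)
    (hA : ∀ j < N, opNorm (A j) ≤ Υ) (hB : ∀ j < N, opNorm (B j) ≤ Υ)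
    (k tk : ℕ) (hktk : k + tk ≤ N)
    (hctrb : (ctrb A B k tk * (ctrb A B k tk)ᵀ
      - lamC • (1 : Matrix (Fin nx) (Fin nx) ℝ)).PosSemidef)
    (Ψ : ℝ) (hΨ : Ψ = ∑ i ∈ Icc 1 tk, Υ ^ i) :
    ∀ pbar : Fin nx → ℝ,
      ∃ (q : ℕ → Fin nu → ℝ) (p : ℕ → Fin nx → ℝ),
        p k = pbar ∧
        (∀ j, k ≤ j → j < k + tk → p (j + 1) = A j *ᵥ p j + B j *ᵥ q j) ∧
        p (k + tk) = 0 ∧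
        Real.sqrt (∑ j ∈ Ico k (k + tk), evNorm (q j) ^ 2)
          ≤ (Ψ * Υ ^ tk / lamC) * evNorm pbar ∧
        (∀ j, k ≤ j → j < k + tk →
          evNorm (p j) ≤ (Υ ^ (j - k) + Ψ ^ 2 * Υ ^ tk / lamC) * evNorm pbar) := by
  intro pbar
  obtain ⟨w, hGw, hw_coer⟩ :=
    exists_mulVec_eq_of_posSemidef_sub_smul_one hlamC hctrb (-(prodE A k tk *ᵥ pbar))
  have hw : evNorm w ≤ Υ ^ tk / lamC * evNorm pbar := by
    rw [div_mul_eq_mul_div, le_div_iff₀' hlamC]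
    refine hw_coer.trans ((evNorm_neg _).trans_le ((evNorm_mulVec_le _ _).trans ?_))
    exact mul_le_mul_of_nonneg_right (opNorm_prodE_le A hΥ.le hA k hktk) (evNorm_nonneg _)
  have hΨ0 : 0 ≤ Ψ := hΨ ▸ sum_nonneg fun s _ => pow_nonneg hΥ.le s
  set u := fun m => (impulseResponse A B k tk m)ᵀ *ᵥ w
  have hE : √(∑ m ∈ range tk, evNorm (u m) ^ 2) ≤ Ψ * Υ ^ tk / lamC * evNorm pbar := by
    refine (sqrt_sum_evNorm_gramianInput_sq_le hΥ.le hA hB hktk w).trans ?_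
    rw [← hΨ, mul_div_assoc, mul_assoc]
    exact mul_le_mul_of_nonneg_left hw hΨ0
  refine ⟨fun j => u (j - k), fun j => stateSeq A B k pbar u (j - k), by simp [stateSeq],
    fun j hj _ => stateSeq_sub_succ A B k pbar u hj, ?_, ?_, fun j hj hjt => ?_⟩
  · simp [stateSeq_gramianInput, hGw, u]
  · simpa [sum_Ico_eq_sum_range] using hE
  · refine (evNorm_stateSeq_le_of_energy hΥ.le hA hB hktk (by omega) pbar u).trans ?_
    rw [← hΨ]
    calc _ ≤ Υ ^ (j - k) * evNorm pbar + Ψ * (Ψ * Υ ^ tk / lamC * evNorm pbar) := by gcongr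
      _ = _ := by ring

/-- **Bounded deadbeat steering under uniform controllability (construction in the proof
of Lemma 5.2).**  If `‖A_j‖, ‖B_j‖ ≤ Υ` and `Ξ_{k,t_k}Ξ_{k,t_k}ᵀ ⪰ λ_C I`, then any
initial state `p̄` at stage `k` can be steered to `0` at stage `k + t_k` by controls of
total Euclidean norm at most `(ΨΥ^{t_k}/λ_C)‖p̄‖`, with intermediate states bounded by
`(Υ^{j−k} + Ψ²Υ^{t_k}/λ_C)‖p̄‖`, where `Ψ = Σ_{i=1}^{t_k}Υ^i`. -/
theorem bounded_deadbeat_steering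
    (N nx nu : ℕ) (hN : 1 ≤ N) (hnx : 1 ≤ nx) (hnu : 1 ≤ nu)
    (A : ℕ → Matrix (Fin nx) (Fin nx) ℝ) (B : ℕ → Matrix (Fin nx) (Fin nu) ℝ)
    (Υ lamC : ℝ) (hΥ : 0 < Υ) (hlamC : 0 < lamC)
    (hA : ∀ j < N, opNorm (A j) ≤ Υ) (hB : ∀ j < N, opNorm (B j) ≤ Υ)
    (k tk : ℕ) (htk : 1 ≤ tk) (hktk : k + tk ≤ N)
    (hctrb : (ctrb A B k tk * (ctrb A B k tk)ᵀ
      - lamC • (1 : Matrix (Fin nx) (Fin nx) ℝ)).PosSemidef)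
    (Ψ : ℝ) (hΨ : Ψ = ∑ i ∈ Icc 1 tk, Υ ^ i) :
    ∀ pbar : Fin nx → ℝ,
      ∃ (q : ℕ → Fin nu → ℝ) (p : ℕ → Fin nx → ℝ),
        p k = pbar ∧
        (∀ j, k ≤ j → j < k + tk → p (j + 1) = A j *ᵥ p j + B j *ᵥ q j) ∧
        p (k + tk) = 0 ∧
        Real.sqrt (∑ j ∈ Ico k (k + tk), evNorm (q j) ^ 2)
          ≤ (Ψ * Υ ^ tk / lamC) * evNorm pbar ∧
        (∀ j, k ≤ j → j < k + tk →
          evNorm (p j) ≤ (Υ ^ (j - k) + Ψ ^ 2 * Υ ^ tk / lamC) * evNorm pbar) :=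
  bounded_deadbeat_steering_general N nx nu A B Υ lamC hΥ hlamC hA hB k tk hktk hctrb Ψ hΨ
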